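/- arXiv:math/0510412 — 5 statements merged into one kernel-verified Lean document; each statement's English description precedes it below -/
import Mathlib

section
/- Let π₁ : P¹(K) → P¹(L) be a specialisation (a map preserving all closed algebraic subvarieties of Cartesian powers of P¹ defined over L), where L ⊆ K are fields. Define O_K = {x ∈ K : π₁([x:1]) ≠ [1:0]}. Then O_K is a subring of K: it contains 1 and is closed under addition and multiplication. -/
/-- The projective line over `K`. -/
abbrev P1 (K : Type*) [Field K] := Projectivization K (Fin 2 → K)

/-- A point of `P¹(K)` lies in `P¹(L)` if it has a homogeneous coordinate vector with
entries in `L`. -/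
def InL {K : Type*} [Field K] (L : Subfield K) (p : P1 K) : Prop :=
  ∃ (x : Fin 2 → K) (hx : x ≠ 0), (∀ i, x i ∈ L) ∧ p = Projectivization.mk K x hx

/-- A family of multi-homogeneous polynomials (one block of two variables for each of the `m`
factors of `(P¹)^m`) with coefficients in `L`: a closed subvariety of `(P¹)^m` defined
over `L`. -/
def DefinedOver {K : Type*} [Field K] (L : Subfield K) {m : ℕ}
    (S : Set (MvPolynomial (Fin m × Fin 2) K)) : Prop :=
  ∀ p ∈ S, (∀ mon, MvPolynomial.coeff mon p ∈ L) ∧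
    ∃ d : Fin m → ℕ,
      MvPolynomial.IsWeightedHomogeneous (fun q : Fin m × Fin 2 => Pi.single q.1 1) p d

/-- A tuple `a ∈ (P¹(K))^m` lies on the closed subvariety cut out by `S`. -/
def Vanishes {K : Type*} [Field K] {m : ℕ}
    (S : Set (MvPolynomial (Fin m × Fin 2) K)) (a : Fin m → P1 K) : Prop :=
  ∃ x : Fin m → Fin 2 → K,
    (∀ k, ∃ h : x k ≠ 0, Projectivization.mk K (x k) h = a k) ∧
    ∀ p ∈ S, MvPolynomial.eval (fun q : Fin m × Fin 2 => x q.1 q.2) p = 0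

/-- A specialisation `π₁ : P¹(K) → P¹(L)`: it lands in `P¹(L)`, fixes `P¹(L)` pointwise, and
preserves every closed algebraic subvariety of every Cartesian power of `P¹` defined
over `L`. -/
def IsSpecialisation {K : Type*} [Field K] (L : Subfield K) (π : P1 K → P1 K) : Prop :=
  (∀ p, InL L (π p)) ∧ (∀ p, InL L p → π p = p) ∧
    ∀ (m : ℕ) (S : Set (MvPolynomial (Fin m × Fin 2) K)), DefinedOver L S →
      ∀ a : Fin m → P1 K, Vanishes S a → Vanishes S (π ∘ a)

/-- The point `[x : 1]` of `P¹(K)`. -/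
def pt {K : Type*} [Field K] (x : K) : P1 K :=
  Projectivization.mk K ![x, 1] (by intro h; simpa using congrFun h 1)

/-- The point at infinity `[1 : 0]` of `P¹(K)`. -/
def inftyPt (K : Type*) [Field K] : P1 K :=
  Projectivization.mk K ![1, 0] (by intro h; simpa using congrFun h 0)

lemma mk_eq_infty_iff {K : Type*} [Field K] {v : Fin 2 → K} (hv : v ≠ 0) :
    Projectivization.mk K v hv = inftyPt K ↔ v 1 = 0 := by
  rw [inftyPt, Projectivization.mk_eq_mk_iff]
  constructor
  · rintro ⟨a, ha⟩
    have := congrFun ha 1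
    simpa using this.symm
  · intro h1
    have h0 : v 0 ≠ 0 := by
      intro h0
      apply hv
      funext i
      fin_cases i <;> simp [h0, h1]
    exact ⟨Units.mk0 (v 0) h0, by funext i; fin_cases i <;> simp [h1]⟩

open MvPolynomial in
/-- Core lemma: push a point of a curve in (P¹)³ through the specialisation. -/
lemma push3 {K : Type*} [Field K] (L : Subfield K) (π : P1 K → P1 K)
    (hπ : IsSpecialisation L π) (p : MvPolynomial (Fin 3 × Fin 2) K)
    (hc : ∀ mon, MvPolynomial.coeff mon p ∈ L)
    (hh : ∃ d : Fin 3 → ℕ,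
      MvPolynomial.IsWeightedHomogeneous (fun q : Fin 3 × Fin 2 => Pi.single q.1 1) p d)
    (x y z : K)
    (he : MvPolynomial.eval
      (fun q : Fin 3 × Fin 2 => (![![x,1],![y,1],![z,1]] : Fin 3 → Fin 2 → K) q.1 q.2) p = 0)
    (hx : π (pt x) ≠ inftyPt K) (hy : π (pt y) ≠ inftyPt K) :
    ∃ b : Fin 3 → Fin 2 → K, b 0 1 ≠ 0 ∧ b 1 1 ≠ 0 ∧
      (∃ h2 : b 2 ≠ 0, Projectivization.mk K (b 2) h2 = π (pt z)) ∧
      MvPolynomial.eval (fun q : Fin 3 × Fin 2 => b q.1 q.2) p = 0 := by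
  set a : Fin 3 → P1 K := ![pt x, pt y, pt z] with ha
  have hdef : DefinedOver L {p} := by
    rintro p' rfl
    exact ⟨hc, hh⟩
  have hvan : Vanishes {p} a := by
    refine ⟨![![x,1],![y,1],![z,1]], ?_, ?_⟩
    · intro k
      have hne : ∀ w : K, (![w, 1] : Fin 2 → K) ≠ 0 := fun w h => by
        simpa using congrFun h 1
      fin_cases k <;>
        · simp only [ha, Matrix.cons_val_zero, Matrix.cons_val_one, Matrix.head_cons,
            Matrix.cons_val_two, Matrix.tail_cons, Fin.mk_zero, Fin.mk_one]
          exact ⟨hne _, rfl⟩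
    · rintro p' rfl
      exact he
  obtain ⟨b, hb1, hb2⟩ := hπ.2.2 3 {p} hdef a hvan
  simp only [Function.comp_apply, ha] at hb1
  obtain ⟨h0, hm0⟩ := hb1 0
  obtain ⟨h1, hm1⟩ := hb1 1
  obtain ⟨h2, hm2⟩ := hb1 2
  simp only [Matrix.cons_val_zero, Matrix.cons_val_one, Matrix.head_cons,
    Matrix.cons_val_two, Matrix.tail_cons] at hm0 hm1 hm2
  refine ⟨b, ?_, ?_, ⟨h2, hm2⟩, hb2 p rfl⟩
  · intro hz
    exact hx (by rw [← hm0]; exact (mk_eq_infty_iff h0).2 hz)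
  · intro hz
    exact hy (by rw [← hm1]; exact (mk_eq_infty_iff h1).2 hz)

open MvPolynomial in
/-- Closure of `O_K` under a binary operation `f`, given a suitable curve in `(P¹)³`. -/
lemma closed_under {K : Type*} [Field K] (L : Subfield K) (π : P1 K → P1 K)
    (hπ : IsSpecialisation L π) (p : MvPolynomial (Fin 3 × Fin 2) K)
    (hc : ∀ mon, MvPolynomial.coeff mon p ∈ L)
    (hh : ∃ d : Fin 3 → ℕ,
      MvPolynomial.IsWeightedHomogeneous (fun q : Fin 3 × Fin 2 => Pi.single q.1 1) p d)
    (x y z : K)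
    (he : MvPolynomial.eval
      (fun q : Fin 3 × Fin 2 => (![![x,1],![y,1],![z,1]] : Fin 3 → Fin 2 → K) q.1 q.2) p = 0)
    (hzero : ∀ b : Fin 3 → Fin 2 → K, b 0 1 ≠ 0 → b 1 1 ≠ 0 → b 2 0 ≠ 0 → b 2 1 = 0 →
      MvPolynomial.eval (fun q : Fin 3 × Fin 2 => b q.1 q.2) p ≠ 0)
    (hx : π (pt x) ≠ inftyPt K) (hy : π (pt y) ≠ inftyPt K) :
    π (pt z) ≠ inftyPt K := by
  obtain ⟨b, hb0, hb1, ⟨h2, hm2⟩, hev⟩ := push3 L π hπ p hc hh x y z he hx hy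
  intro hcon
  have h21 : b 2 1 = 0 := (mk_eq_infty_iff h2).1 (hm2.trans hcon)
  have h20 : b 2 0 ≠ 0 := by
    intro h20
    apply h2
    funext i
    fin_cases i <;> simp [h20, h21]
  exact hzero b hb0 hb1 h20 h21 hev

set_option maxHeartbeats 1000000 in
set_option synthInstance.maxHeartbeats 400000 in
open MvPolynomial in
/-- For a specialisation `π₁ : P¹(K) → P¹(L)`, the set
`O_K = {x ∈ K : π₁([x:1]) ≠ [1:0]}` is a subring of `K`: it contains `1` and is closed under
addition and multiplication. -/
theorem specialisation_ring {K : Type*} [Field K] (L : Subfield K)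
    (π : P1 K → P1 K) (hπ : IsSpecialisation L π) :
    (1 : K) ∈ {x : K | π (pt x) ≠ inftyPt K} ∧
      (∀ x y : K, x ∈ {x : K | π (pt x) ≠ inftyPt K} → y ∈ {x : K | π (pt x) ≠ inftyPt K} →
        x + y ∈ {x : K | π (pt x) ≠ inftyPt K} ∧ x * y ∈ {x : K | π (pt x) ≠ inftyPt K}) := by
  set w : Fin 3 × Fin 2 → Fin 3 → ℕ := fun q => Pi.single q.1 1 with hw
  constructor
  · intro hcon
    have hfix : π (pt 1) = pt 1 := by
      apply hπ.2.1
      exact ⟨![1, 1], by intro h; simpa using congrFun h 1,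
        fun i => by fin_cases i <;> simpa using L.one_mem, rfl⟩
    rw [hfix] at hcon
    have := (mk_eq_infty_iff _).1 hcon
    simpa using this
  · intro x y hx hy
    constructor
    · -- addition, via the curve D : u·x·z + w·v·z = y·v·x
      set p : MvPolynomial (Fin 3 × Fin 2) K :=
        X (0,0) * X (1,1) * X (2,1) + X (1,0) * X (0,1) * X (2,1)
          - X (2,0) * X (0,1) * X (1,1) with hp
      have hpmap : p = MvPolynomial.map (L.subtype)
          (X (0,0) * X (1,1) * X (2,1) + X (1,0) * X (0,1) * X (2,1)
            - X (2,0) * X (0,1) * X (1,1)) := by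
        simp [hp, map_sub, map_add, map_mul, map_X]
      refine closed_under L π hπ p ?_ ?_ x y (x + y) ?_ ?_ hx hy
      · intro mon
        rw [hpmap, coeff_map]
        exact Subtype.mem _
      · refine ⟨((Pi.single (0:Fin 3) (1:ℕ) + Pi.single 1 1) + Pi.single 2 1 : Fin 3 → ℕ), ?_⟩
        have h1 := ((isWeightedHomogeneous_X K w ((0 : Fin 3), (0 : Fin 2))).mul
          (isWeightedHomogeneous_X K w (1,1))).mul (isWeightedHomogeneous_X K w (2,1))
        have h2 := ((isWeightedHomogeneous_X K w ((1 : Fin 3), (0 : Fin 2))).mul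
          (isWeightedHomogeneous_X K w (0,1))).mul (isWeightedHomogeneous_X K w (2,1))
        have h3 := ((isWeightedHomogeneous_X K w ((2 : Fin 3), (0 : Fin 2))).mul
          (isWeightedHomogeneous_X K w (0,1))).mul (isWeightedHomogeneous_X K w (1,1))
        simp only [hw] at h1 h2 h3
        have e2 : ((Pi.single (1:Fin 3) (1:ℕ) + Pi.single (0:Fin 3) 1) + Pi.single (2:Fin 3) 1 : Fin 3 → ℕ)
            = ((Pi.single (0:Fin 3) (1:ℕ) + Pi.single (1:Fin 3) 1) + Pi.single (2:Fin 3) 1 : Fin 3 → ℕ) := by abel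
        have e3 : ((Pi.single (2:Fin 3) (1:ℕ) + Pi.single (0:Fin 3) 1) + Pi.single (1:Fin 3) 1 : Fin 3 → ℕ)
            = ((Pi.single (0:Fin 3) (1:ℕ) + Pi.single (1:Fin 3) 1) + Pi.single (2:Fin 3) 1 : Fin 3 → ℕ) := by abel
        rw [e2] at h2; rw [e3] at h3
        rw [← MvPolynomial.mem_weightedHomogeneousSubmodule] at h1 h2 h3
        rw [← MvPolynomial.mem_weightedHomogeneousSubmodule]
        exact Submodule.sub_mem _ (Submodule.add_mem _ h1 h2) h3
      · simp only [hp, map_sub, map_add, map_mul, eval_X]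
        simp [Matrix.vecHead, Matrix.vecTail]
      · intro b hb0 hb1 hb20 hb21
        simp only [hp, map_sub, map_add, map_mul, eval_X]
        intro h
        apply mul_ne_zero (mul_ne_zero hb20 hb0) hb1
        linear_combination (b 0 0 * b 1 1 + b 1 0 * b 0 1) * hb21 - h
    · -- multiplication, via the curve C : u·w·z = y·v·x
      set p : MvPolynomial (Fin 3 × Fin 2) K :=
        X (0,0) * X (1,0) * X (2,1) - X (2,0) * X (0,1) * X (1,1) with hp
      have hpmap : p = MvPolynomial.map (L.subtype)
          (X (0,0) * X (1,0) * X (2,1) - X (2,0) * X (0,1) * X (1,1)) := by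
        simp [hp, map_sub, map_mul, map_X]
      refine closed_under L π hπ p ?_ ?_ x y (x * y) ?_ ?_ hx hy
      · intro mon
        rw [hpmap, coeff_map]
        exact Subtype.mem _
      · refine ⟨((Pi.single (0:Fin 3) (1:ℕ) + Pi.single 1 1) + Pi.single 2 1 : Fin 3 → ℕ), ?_⟩
        have h1 := ((isWeightedHomogeneous_X K w ((0 : Fin 3), (0 : Fin 2))).mul
          (isWeightedHomogeneous_X K w (1,0))).mul (isWeightedHomogeneous_X K w (2,1))
        have h3 := ((isWeightedHomogeneous_X K w ((2 : Fin 3), (0 : Fin 2))).mul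
          (isWeightedHomogeneous_X K w (0,1))).mul (isWeightedHomogeneous_X K w (1,1))
        simp only [hw] at h1 h3
        have e3 : ((Pi.single (2:Fin 3) (1:ℕ) + Pi.single (0:Fin 3) 1) + Pi.single (1:Fin 3) 1 : Fin 3 → ℕ)
            = ((Pi.single (0:Fin 3) (1:ℕ) + Pi.single (1:Fin 3) 1) + Pi.single (2:Fin 3) 1 : Fin 3 → ℕ) := by abel
        rw [e3] at h3
        rw [← MvPolynomial.mem_weightedHomogeneousSubmodule] at h1 h3
        rw [← MvPolynomial.mem_weightedHomogeneousSubmodule]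
        exact Submodule.sub_mem _ h1 h3
      · simp only [hp, map_sub, map_mul, eval_X]
        simp [Matrix.vecHead, Matrix.vecTail]
      · intro b hb0 hb1 hb20 hb21
        simp only [hp, map_sub, map_mul, eval_X]
        intro h
        apply mul_ne_zero (mul_ne_zero hb20 hb0) hb1
        linear_combination b 0 0 * b 1 0 * hb21 - h
end

section
/- With π₁ : P¹(K) → P¹(L) a specialisation and O_K = {x ∈ K : π₁([x:1]) ≠ [1:0]}, M_K = {x ∈ K : π₁([x:1]) = [0:1]}: the set M_K is an ideal of O_K. -/
section Aux

open MvPolynomial Projectivization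

variable {K : Type*} [Field K]

lemma snd_ne_zero_aux (v : Fin 2 → K) (hv : v ≠ 0) (h0 : v 0 = 0) : v 1 ≠ 0 := by
  intro h1; apply hv; funext i; fin_cases i <;> simp [h0, h1]

lemma mk_eq_pt_zero_iff_aux (v : Fin 2 → K) (hv : v ≠ 0) :
    Projectivization.mk K v hv = pt 0 ↔ v 0 = 0 := by
  rw [pt, mk_eq_mk_iff']
  constructor
  · rintro ⟨a, ha⟩
    have := congrFun ha 0
    simpa using this.symm
  · intro h0
    refine ⟨v 1, ?_⟩
    funext i
    fin_cases i <;> simp [h0]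

lemma mk_eq_infty_iff_aux (v : Fin 2 → K) (hv : v ≠ 0) :
    Projectivization.mk K v hv = inftyPt K ↔ v 1 = 0 := by
  rw [inftyPt, mk_eq_mk_iff']
  constructor
  · rintro ⟨a, ha⟩
    have := congrFun ha 1
    simpa using this.symm
  · intro h1
    refine ⟨v 0, ?_⟩
    funext i
    fin_cases i <;> simp [h1]

lemma pt_zero_ne_infty_aux : pt (0:K) ≠ inftyPt K := by
  rw [pt, Ne, mk_eq_infty_iff_aux]
  simp

lemma X3_eq_aux (a b c : Fin 3 × Fin 2) :
    (X a * X b * X c : MvPolynomial (Fin 3 × Fin 2) K) =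
      monomial (Finsupp.single a 1 + Finsupp.single b 1 + Finsupp.single c 1) 1 := by
  rw [X, X, X, monomial_mul, monomial_mul, one_mul, one_mul]

lemma coeff3_aux (a b c : Fin 3 × Fin 2) (mon : (Fin 3 × Fin 2) →₀ ℕ) :
    coeff mon (X a * X b * X c : MvPolynomial (Fin 3 × Fin 2) K) = 0 ∨
    coeff mon (X a * X b * X c : MvPolynomial (Fin 3 × Fin 2) K) = 1 := by
  rw [X3_eq_aux, coeff_monomial]
  split_ifs <;> simp

lemma hom3_aux (a b c : Fin 3 × Fin 2)
    (h : (Pi.single a.1 1 + Pi.single b.1 1 + Pi.single c.1 1 : Fin 3 → ℕ) = fun _ => 1) :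
    IsWeightedHomogeneous (fun q : Fin 3 × Fin 2 => Pi.single q.1 1)
      (X a * X b * X c : MvPolynomial (Fin 3 × Fin 2) K) (fun _ => 1) :=
  h ▸ (((isWeightedHomogeneous_X (R := K) _ a).mul
    (isWeightedHomogeneous_X (R := K) _ b)).mul (isWeightedHomogeneous_X (R := K) _ c))

lemma IWH_sub_aux {σ : Type*} {M : Type*} [AddCommMonoid M] {w : σ → M}
    {p q : MvPolynomial σ K} {n : M}
    (hp : MvPolynomial.IsWeightedHomogeneous w p n)
    (hq : MvPolynomial.IsWeightedHomogeneous w q n) :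
    MvPolynomial.IsWeightedHomogeneous w (p - q) n := by
  intro d hd
  rw [coeff_sub] at hd
  by_cases h : coeff d p = 0
  · exact hq (by intro h'; simp [h, h'] at hd)
  · exact hp h

lemma zero_or_one_mem_aux (L : Subfield K) {c : K} (h : c = 0 ∨ c = 1) : c ∈ L := by
  rcases h with h | h
  · exact h ▸ L.zero_mem
  · exact h ▸ L.one_mem

lemma vpair_ne_zero_aux (a : K) : ![a, (1:K)] ≠ 0 := by
  intro h
  exact one_ne_zero (α := K) (by simpa using congrFun h 1)

end Aux

/-- For a specialisation `π₁ : P¹(K) → P¹(L)`, the set `M_K = {x : π₁([x:1]) = [0:1]}` is an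
ideal of `O_K = {x : π₁([x:1]) ≠ [1:0]}`: it contains `0`, is contained in `O_K`, is closed
under addition, and absorbs multiplication by elements of `O_K`. -/
theorem specialisation_ideal {K : Type*} [Field K] (L : Subfield K)
    (π : P1 K → P1 K) (hπ : IsSpecialisation L π) :
    (0 : K) ∈ {x : K | π (pt x) = pt (0 : K)} ∧
      ({x : K | π (pt x) = pt (0 : K)} ⊆ {x : K | π (pt x) ≠ inftyPt K}) ∧
      (∀ x y : K, x ∈ {x : K | π (pt x) = pt (0 : K)} → y ∈ {x : K | π (pt x) = pt (0 : K)} →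
        x + y ∈ {x : K | π (pt x) = pt (0 : K)}) ∧
      (∀ x y : K, x ∈ {x : K | π (pt x) ≠ inftyPt K} → y ∈ {x : K | π (pt x) = pt (0 : K)} →
        x * y ∈ {x : K | π (pt x) = pt (0 : K)}) := by
  open MvPolynomial Projectivization in
  obtain ⟨hland, hfix, hpres⟩ := hπ
  refine ⟨?_, ?_, ?_, ?_⟩
  · -- 0 ∈ M
    apply hfix
    refine ⟨![0, 1], vpair_ne_zero_aux 0, fun i => ?_, rfl⟩
    fin_cases i
    · exact L.zero_mem
    · exact L.one_mem
  · -- M ⊆ O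
    intro x hx
    simp only [Set.mem_setOf_eq] at hx ⊢
    rw [hx]
    exact pt_zero_ne_infty_aux
  · -- addition
    intro x y hx hy
    simp only [Set.mem_setOf_eq] at hx hy ⊢
    set D : MvPolynomial (Fin 3 × Fin 2) K :=
      X (0,0) * X (1,1) * X (2,1) + X (1,0) * X (0,1) * X (2,1)
        - X (2,0) * X (0,1) * X (1,1) with hD
    have hdef : DefinedOver L {D} := by
      intro p hp
      rw [Set.mem_singleton_iff] at hp
      subst hp
      constructor
      · intro mon
        rw [hD, coeff_sub, coeff_add]
        exact sub_mem
          (add_mem (zero_or_one_mem_aux L (coeff3_aux _ _ _ mon))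
            (zero_or_one_mem_aux L (coeff3_aux _ _ _ mon)))
          (zero_or_one_mem_aux L (coeff3_aux _ _ _ mon))
      · refine ⟨fun _ => 1, IWH_sub_aux (MvPolynomial.IsWeightedHomogeneous.add
          (hom3_aux _ _ _ ?_) (hom3_aux _ _ _ ?_)) (hom3_aux _ _ _ ?_)⟩ <;>
          (funext i; fin_cases i <;> simp)
    have hvan : Vanishes {D} ![pt x, pt y, pt (x + y)] := by
      refine ⟨![![x, 1], ![y, 1], ![x + y, 1]], fun k => ?_, ?_⟩
      · fin_cases k
        · exact ⟨vpair_ne_zero_aux _, rfl⟩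
        · exact ⟨vpair_ne_zero_aux _, rfl⟩
        · exact ⟨vpair_ne_zero_aux _, rfl⟩
      · intro p hp
        rw [Set.mem_singleton_iff] at hp
        subst hp
        rw [hD]
        simp only [map_sub, map_add, eval_mul, eval_X]
        simp [Matrix.vecHead, Matrix.vecTail]
    obtain ⟨z, hz, hev⟩ := hpres 3 {D} hdef _ hvan
    obtain ⟨hz0, hmk0⟩ := hz 0
    obtain ⟨hz1, hmk1⟩ := hz 1
    obtain ⟨hz2, hmk2⟩ := hz 2
    have hm0 : Projectivization.mk K (z 0) hz0 = pt 0 := by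
      rw [hmk0]; exact hx
    have hm1 : Projectivization.mk K (z 1) hz1 = pt 0 := by
      rw [hmk1]; exact hy
    have z00 : z 0 0 = 0 := (mk_eq_pt_zero_iff_aux _ hz0).mp hm0
    have z10 : z 1 0 = 0 := (mk_eq_pt_zero_iff_aux _ hz1).mp hm1
    have z01 : z 0 1 ≠ 0 := snd_ne_zero_aux _ hz0 z00
    have z11 : z 1 1 ≠ 0 := snd_ne_zero_aux _ hz1 z10
    have heq : z 0 0 * z 1 1 * z 2 1 + z 1 0 * z 0 1 * z 2 1
        - z 2 0 * z 0 1 * z 1 1 = 0 := by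
      have := hev D rfl
      rw [hD] at this
      simpa only [map_sub, map_add, eval_mul, eval_X] using this
    rw [z00, z10] at heq
    have z20 : z 2 0 = 0 := by
      have h : z 2 0 * z 0 1 * z 1 1 = 0 := by linear_combination -heq
      rcases mul_eq_zero.mp h with h' | h'
      · rcases mul_eq_zero.mp h' with h'' | h''
        · exact h''
        · exact absurd h'' z01
      · exact absurd h' z11
    have : Projectivization.mk K (z 2) hz2 = pt 0 :=
      (mk_eq_pt_zero_iff_aux _ hz2).mpr z20
    rw [hmk2] at this
    exact this
  · -- multiplication
    intro x y hx hy
    simp only [Set.mem_setOf_eq] at hx hy ⊢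
    set C : MvPolynomial (Fin 3 × Fin 2) K :=
      X (0,0) * X (1,0) * X (2,1) - X (2,0) * X (0,1) * X (1,1) with hC
    have hdef : DefinedOver L {C} := by
      intro p hp
      rw [Set.mem_singleton_iff] at hp
      subst hp
      constructor
      · intro mon
        rw [hC, coeff_sub]
        exact sub_mem (zero_or_one_mem_aux L (coeff3_aux _ _ _ mon))
          (zero_or_one_mem_aux L (coeff3_aux _ _ _ mon))
      · refine ⟨fun _ => 1, IWH_sub_aux (hom3_aux _ _ _ ?_) (hom3_aux _ _ _ ?_)⟩ <;>
          (funext i; fin_cases i <;> simp)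
    have hvan : Vanishes {C} ![pt x, pt y, pt (x * y)] := by
      refine ⟨![![x, 1], ![y, 1], ![x * y, 1]], fun k => ?_, ?_⟩
      · fin_cases k
        · exact ⟨vpair_ne_zero_aux _, rfl⟩
        · exact ⟨vpair_ne_zero_aux _, rfl⟩
        · exact ⟨vpair_ne_zero_aux _, rfl⟩
      · intro p hp
        rw [Set.mem_singleton_iff] at hp
        subst hp
        rw [hC]
        simp only [map_sub, eval_mul, eval_X]
        simp [Matrix.vecHead, Matrix.vecTail]
    obtain ⟨z, hz, hev⟩ := hpres 3 {C} hdef _ hvan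
    obtain ⟨hz0, hmk0⟩ := hz 0
    obtain ⟨hz1, hmk1⟩ := hz 1
    obtain ⟨hz2, hmk2⟩ := hz 2
    have hm0 : Projectivization.mk K (z 0) hz0 ≠ inftyPt K := by
      rw [hmk0]; exact hx
    have hm1 : Projectivization.mk K (z 1) hz1 = pt 0 := by
      rw [hmk1]; exact hy
    have z01 : z 0 1 ≠ 0 := fun h => hm0 ((mk_eq_infty_iff_aux _ hz0).mpr h)
    have z10 : z 1 0 = 0 := (mk_eq_pt_zero_iff_aux _ hz1).mp hm1
    have z11 : z 1 1 ≠ 0 := snd_ne_zero_aux _ hz1 z10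
    have heq : z 0 0 * z 1 0 * z 2 1 - z 2 0 * z 0 1 * z 1 1 = 0 := by
      have := hev C rfl
      rw [hC] at this
      simpa only [map_sub, eval_mul, eval_X] using this
    rw [z10] at heq
    have z20 : z 2 0 = 0 := by
      have h : z 2 0 * z 0 1 * z 1 1 = 0 := by linear_combination -heq
      rcases mul_eq_zero.mp h with h' | h'
      · rcases mul_eq_zero.mp h' with h'' | h''
        · exact h''
        · exact absurd h'' z01
      · exact absurd h' z11
    have : Projectivization.mk K (z 2) hz2 = pt 0 :=
      (mk_eq_pt_zero_iff_aux _ hz2).mpr z20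
    rw [hmk2] at this
    exact this
end

section
/- With π₁ : P¹(K) → P¹(L) a specialisation and O_K = {x ∈ K : π₁([x:1]) ≠ [1:0]}: if x ∈ K* and x ∉ O_K, then x⁻¹ ∈ O_K and moreover π₁([x⁻¹ : 1]) = [0:1]. In particular, Frac(O_K) = K. -/
open MvPolynomial Projectivization

/-- The polynomial cutting out `C ⊆ (P¹)³`. -/
noncomputable def myP (K : Type*) [Field K] : MvPolynomial (Fin 3 × Fin 2) K :=
  X (0,0) * X (1,0) * X (2,1) - X (0,1) * X (1,1) * X (2,0)

lemma myP_eq (K : Type*) [Field K] : myP K =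
    monomial (Finsupp.single ((0:Fin 3),(0:Fin 2)) 1 + Finsupp.single (1,0) 1 + Finsupp.single (2,1) 1) 1
  - monomial (Finsupp.single ((0:Fin 3),(1:Fin 2)) 1 + Finsupp.single (1,1) 1 + Finsupp.single (2,0) 1) 1 := by
  simp [myP, X, monomial_mul]

lemma myP_definedOver {K : Type*} [Field K] (L : Subfield K) :
    DefinedOver L ({myP K} : Set (MvPolynomial (Fin 3 × Fin 2) K)) := by
  intro p hp
  rcases Set.mem_singleton_iff.mp hp with rfl
  constructor
  · intro mon
    rw [myP_eq, coeff_sub, coeff_monomial, coeff_monomial]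
    apply sub_mem <;> split_ifs <;> first | exact one_mem L | exact zero_mem L
  · refine ⟨fun _ => 1, ?_⟩
    rw [← mem_weightedHomogeneousSubmodule, myP_eq]
    apply sub_mem <;> rw [mem_weightedHomogeneousSubmodule] <;>
      apply isWeightedHomogeneous_monomial
    · rw [map_add, map_add]
      simp only [Finsupp.weight, LinearMap.toAddMonoidHom_coe,
        Finsupp.linearCombination_single, one_smul]
      funext i; fin_cases i <;> simp [Pi.single_apply]
    · rw [map_add, map_add]
      simp only [Finsupp.weight, LinearMap.toAddMonoidHom_coe,
        Finsupp.linearCombination_single, one_smul]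
      funext i; fin_cases i <;> simp [Pi.single_apply]

lemma pt_ne_infty {K : Type*} [Field K] (y : K) : pt y ≠ inftyPt K := by
  intro h
  rw [pt, inftyPt, mk_eq_mk_iff'] at h
  obtain ⟨c, hc⟩ := h
  have := congrFun hc 1
  simp [Matrix.vecHead, Matrix.vecTail] at this

lemma pt_mem_L {K : Type*} [Field K] (L : Subfield K) (y : K) (hy : y ∈ L) : InL L (pt y) :=
  ⟨![y, 1], by intro h; simpa using congrFun h 1, fun i => by
    fin_cases i
    · exact hy
    · exact one_mem L, rfl⟩

/-- For a specialisation `π₁ : P¹(K) → P¹(L)`: if `x ≠ 0` and `x ∉ O_K` (that is,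
`π₁([x:1]) = [1:0]`), then `π₁([x⁻¹:1]) = [0:1]`, so `x⁻¹ ∈ O_K`; consequently
`Frac(O_K) = K`. -/
theorem specialisation_inv_mem {K : Type*} [Field K] (L : Subfield K)
    (π : P1 K → P1 K) (hπ : IsSpecialisation L π) :
    (∀ x : K, x ≠ 0 → π (pt x) = inftyPt K →
      π (pt x⁻¹) = pt (0 : K) ∧ x⁻¹ ∈ {y : K | π (pt y) ≠ inftyPt K}) ∧
      ∀ z : K, ∃ a b : K, a ∈ {y : K | π (pt y) ≠ inftyPt K} ∧
        b ∈ {y : K | π (pt y) ≠ inftyPt K} ∧ b ≠ 0 ∧ z = a / b := by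
  obtain ⟨h1, h2, h3⟩ := hπ
  have hfix1 : π (pt (1:K)) = pt 1 := h2 _ (pt_mem_L L 1 (one_mem L))
  have hfix0 : π (pt (0:K)) = pt 0 := h2 _ (pt_mem_L L 0 (zero_mem L))
  have key : ∀ x : K, x ≠ 0 → π (pt x) = inftyPt K → π (pt x⁻¹) = pt (0 : K) := by
    intro x hx hinf
    have hvan : Vanishes ({myP K} : Set (MvPolynomial (Fin 3 × Fin 2) K))
        ![pt x, pt x⁻¹, pt 1] := by
      refine ⟨![![x,1], ![x⁻¹,1], ![1,1]], ?_, ?_⟩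
      · intro k
        fin_cases k
        · exact ⟨by intro h; simpa [Matrix.vecHead, Matrix.vecTail] using congrFun h 1, rfl⟩
        · exact ⟨by intro h; simpa [Matrix.vecHead, Matrix.vecTail] using congrFun h 1, rfl⟩
        · exact ⟨by intro h; simpa [Matrix.vecHead, Matrix.vecTail] using congrFun h 1, rfl⟩
      · intro p hp
        rcases Set.mem_singleton_iff.mp hp with rfl
        simp [myP, Matrix.vecHead, Matrix.vecTail, mul_inv_cancel₀ hx]
    obtain ⟨y, hy, heval⟩ := h3 3 _ (myP_definedOver L) _ hvan
    obtain ⟨hy0, hmk0⟩ := hy 0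
    obtain ⟨hy1, hmk1⟩ := hy 1
    obtain ⟨hy2, hmk2⟩ := hy 2
    have hmk0' : Projectivization.mk K (y 0) hy0 = π (pt x) := hmk0
    have hmk1' : Projectivization.mk K (y 1) hy1 = π (pt x⁻¹) := hmk1
    have hmk2' : Projectivization.mk K (y 2) hy2 = π (pt 1) := hmk2
    rw [hinf, inftyPt, mk_eq_mk_iff'] at hmk0'
    rw [hfix1, pt, mk_eq_mk_iff'] at hmk2'
    obtain ⟨c, hc⟩ := hmk0'
    obtain ⟨c', hc'⟩ := hmk2'
    have hc0 : y 0 0 = c := by have := congrFun hc 0; simpa using this.symm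
    have hc1 : y 0 1 = 0 := by have := congrFun hc 1; simpa using this.symm
    have hc'0 : y 2 0 = c' := by have := congrFun hc' 0; simpa using this.symm
    have hc'1 : y 2 1 = c' := by have := congrFun hc' 1; simpa using this.symm
    have hcne : c ≠ 0 := by
      rintro rfl
      apply hy0; funext i; fin_cases i <;> simp [hc0, hc1]
    have hc'ne : c' ≠ 0 := by
      rintro rfl
      apply hy2; funext i; fin_cases i <;> simp [hc'0, hc'1]
    have he := heval (myP K) rfl
    simp only [myP, map_sub, map_mul, eval_X] at he
    rw [hc0, hc1, hc'0, hc'1] at he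
    simp only [zero_mul, mul_zero, sub_zero] at he
    have hy10 : y 1 0 = 0 := by
      rcases mul_eq_zero.mp he with h | h
      · rcases mul_eq_zero.mp h with h | h
        · exact absurd h hcne
        · exact h
      · exact absurd h hc'ne
    have hy11 : y 1 1 ≠ 0 := by
      intro h
      apply hy1; funext i; fin_cases i <;> simp [hy10, h]
    rw [← hmk1', pt, mk_eq_mk_iff']
    refine ⟨y 1 1, ?_⟩
    funext i; fin_cases i <;> simp [hy10]
  constructor
  · intro x hx hinf
    refine ⟨key x hx hinf, ?_⟩
    rw [Set.mem_setOf_eq, key x hx hinf]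
    exact pt_ne_infty 0
  · intro z
    by_cases hz : π (pt z) = inftyPt K
    · have hz0 : z ≠ 0 := by rintro rfl; rw [hfix0] at hz; exact pt_ne_infty 0 hz
      refine ⟨1, z⁻¹, ?_, ?_, inv_ne_zero hz0, ?_⟩
      · rw [Set.mem_setOf_eq, hfix1]; exact pt_ne_infty 1
      · rw [Set.mem_setOf_eq, key z hz0 hz]; exact pt_ne_infty 0
      · rw [one_div, inv_inv]
    · exact ⟨z, 1, hz, by rw [Set.mem_setOf_eq, hfix1]; exact pt_ne_infty 1,
        one_ne_zero, by rw [div_one]⟩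
end

section
/- Let π₁ : P¹(K) → P¹(L) be a specialisation. If π₁ is not injective (there exist distinct x, y ∈ K with π₁([x:1]) = π₁([y:1]) ∈ P¹(L) \ {[1:0]}), then the ring O_K = {x : π₁([x:1]) ≠ [1:0]} is a proper subring of K. -/
/-! A specialisation preserves every relation cut out by a multihomogeneous equation over `L`.
Applied to the homogenised graph of subtraction, the images `[u₀:u₁]`, `[v₀:v₁]`, `[w₀:w₁]` of
`[x:1]`, `[y:1]`, `[x - y:1]` satisfy `w₁ (u₀ v₁ - v₀ u₁) = w₀ u₁ v₁`. When `π [x:1] = π [y:1]` is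
finite the left side vanishes while `u₁ v₁ ≠ 0`, so `π [x - y:1] = [0:1]`. Applied to the graph of
`x y = 1`, `π [m:1] = [0:1]` forces `π [m⁻¹:1] = [1:0]`, so `(x - y)⁻¹ ∉ O_K`. -/

open MvPolynomial

section

variable {K : Type*} [Field K]

namespace P1

theorem mk_eq_mk_iff {u w : Fin 2 → K} (hu : u ≠ 0) (hw : w ≠ 0) :
    Projectivization.mk K u hu = Projectivization.mk K w hw ↔ u 0 * w 1 = w 0 * u 1 := by
  rw [Projectivization.mk_eq_mk_iff']
  constructor
  · rintro ⟨a, rfl⟩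
    simp only [Pi.smul_apply, smul_eq_mul]
    ring
  · intro h
    by_cases hw1 : w 1 = 0
    · have hw0 : w 0 ≠ 0 := fun hw0 => hw (funext (Fin.forall_fin_two.2 ⟨hw0, hw1⟩))
      have hu1 : u 1 = 0 := by simpa [hw1, hw0] using h
      refine ⟨u 0 / w 0, funext (Fin.forall_fin_two.2 ⟨?_, ?_⟩)⟩ <;>
        simp [hw0, hw1, hu1]
    · refine ⟨u 1 / w 1, funext (Fin.forall_fin_two.2 ⟨?_, ?_⟩)⟩ <;>
        simp only [Pi.smul_apply, smul_eq_mul] <;> field_simp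
      linear_combination h.symm

theorem mk_eq_inftyPt_iff {v : Fin 2 → K} (hv : v ≠ 0) :
    Projectivization.mk K v hv = inftyPt K ↔ v 1 = 0 := by
  simp [inftyPt, mk_eq_mk_iff, eq_comm]

theorem mk_eq_pt_zero_iff {v : Fin 2 → K} (hv : v ≠ 0) :
    Projectivization.mk K v hv = pt 0 ↔ v 0 = 0 := by
  simp [pt, mk_eq_mk_iff]

end P1

theorem definedOver_singleton (L : Subfield K) {m : ℕ} {p : MvPolynomial (Fin m × Fin 2) K}
    (hL : p ∈ (map L.subtype).range)
    (hhom : ∃ d,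
      IsWeightedHomogeneous (fun q : Fin m × Fin 2 => (Pi.single q.1 1 : Fin m → ℕ)) p d) :
    DefinedOver L {p} := by
  rintro _ rfl
  obtain ⟨q, rfl⟩ := hL
  exact ⟨fun mon => by rw [coeff_map]; exact (coeff mon q).2, hhom⟩

noncomputable section Equations

variable (R : Type*) [CommRing R]

/-- `z = x - y` on `(P¹)³`, homogenised in the coordinates `x = X (0, 0) / X (0, 1)`, etc. -/
def subEquation : MvPolynomial (Fin 3 × Fin 2) R :=
  X (0, 0) * X (1, 1) * X (2, 1) - X (0, 1) * X (1, 0) * X (2, 1) - X (0, 1) * X (1, 1) * X (2, 0)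

def invEquation : MvPolynomial (Fin 2 × Fin 2) R :=
  X (0, 0) * X (1, 0) - X (0, 1) * X (1, 1)

variable {R}

theorem map_subEquation {S : Type*} [CommRing S] (f : R →+* S) :
    map f (subEquation R) = subEquation S := by
  simp [subEquation]

theorem map_invEquation {S : Type*} [CommRing S] (f : R →+* S) :
    map f (invEquation R) = invEquation S := by
  simp [invEquation]

theorem isWeightedHomogeneous_X_fin_two {m : ℕ} (i : Fin m) (j : Fin 2) :
    IsWeightedHomogeneous (fun q : Fin m × Fin 2 => (Pi.single q.1 1 : Fin m → ℕ))
      (X (i, j) : MvPolynomial (Fin m × Fin 2) R) (Pi.single i 1) :=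
  isWeightedHomogeneous_X R _ (i, j)

theorem isWeightedHomogeneous_subEquation :
    ∃ d, IsWeightedHomogeneous (fun q : Fin 3 × Fin 2 => (Pi.single q.1 1 : Fin 3 → ℕ))
      (subEquation R) d := by
  have hX := isWeightedHomogeneous_X_fin_two (R := R) (m := 3)
  exact ⟨_, ((((hX 0 0).mul (hX 1 1)).mul (hX 2 1)).sub (((hX 0 1).mul (hX 1 0)).mul (hX 2 1))).sub
    (((hX 0 1).mul (hX 1 1)).mul (hX 2 0))⟩

theorem isWeightedHomogeneous_invEquation :
    ∃ d, IsWeightedHomogeneous (fun q : Fin 2 × Fin 2 => (Pi.single q.1 1 : Fin 2 → ℕ))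
      (invEquation R) d := by
  have hX := isWeightedHomogeneous_X_fin_two (R := R) (m := 2)
  exact ⟨_, ((hX 0 0).mul (hX 1 0)).sub ((hX 0 1).mul (hX 1 1))⟩

end Equations

namespace IsSpecialisation

variable {L : Subfield K} {π : P1 K → P1 K}

theorem exists_lift_eval_eq_zero (hπ : IsSpecialisation L π) {m : ℕ}
    {p : MvPolynomial (Fin m × Fin 2) K} (hp : DefinedOver L {p}) (x : Fin m → K)
    (hx : eval (fun q => ![x q.1, 1] q.2) p = 0) :
    ∃ (u : Fin m → Fin 2 → K) (hu : ∀ k, u k ≠ 0),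
      (∀ k, Projectivization.mk K (u k) (hu k) = π (pt (x k))) ∧
        eval (fun q => u q.1 q.2) p = 0 := by
  have hvan : Vanishes {p} (fun k => pt (x k)) :=
    ⟨fun k => ![x k, 1], fun k => ⟨_, rfl⟩, by simpa using hx⟩
  obtain ⟨u, hu, heval⟩ := hπ.2.2 m {p} hp _ hvan
  choose hu hmk using hu
  exact ⟨u, hu, hmk, heval p rfl⟩

theorem apply_pt_sub_eq_pt_zero (hπ : IsSpecialisation L π) {x y : K}
    (hxy : π (pt x) = π (pt y)) (hx : π (pt x) ≠ inftyPt K) : π (pt (x - y)) = pt 0 := by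
  obtain ⟨u, hu, hmk, heval⟩ := hπ.exists_lift_eval_eq_zero
    (definedOver_singleton L ⟨subEquation L, map_subEquation _⟩ isWeightedHomogeneous_subEquation)
    ![x, y, x - y] (by simp [subEquation])
  have h0 : Projectivization.mk K (u 0) (hu 0) = π (pt x) := hmk 0
  have h1 : Projectivization.mk K (u 1) (hu 1) = π (pt x) := (hmk 1).trans hxy.symm
  have h2 : Projectivization.mk K (u 2) (hu 2) = π (pt (x - y)) := hmk 2
  have hu0 : u 0 1 ≠ 0 := fun h => hx (h0 ▸ (P1.mk_eq_inftyPt_iff _).2 h)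
  have hu1 : u 1 1 ≠ 0 := fun h => hx (h1 ▸ (P1.mk_eq_inftyPt_iff _).2 h)
  have hcross : u 0 0 * u 1 1 = u 1 0 * u 0 1 := (P1.mk_eq_mk_iff _ _).1 (h0.trans h1.symm)
  have hu2 : u 2 0 * (u 0 1 * u 1 1) = 0 := by
    simp only [subEquation, map_sub, map_mul, eval_X] at heval
    linear_combination -heval + u 2 1 * hcross
  rw [← h2, P1.mk_eq_pt_zero_iff]
  simpa [hu0, hu1] using hu2

theorem apply_pt_inv_eq_inftyPt (hπ : IsSpecialisation L π) {x : K} (hx : x ≠ 0)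
    (hx0 : π (pt x) = pt 0) : π (pt x⁻¹) = inftyPt K := by
  obtain ⟨u, hu, hmk, heval⟩ := hπ.exists_lift_eval_eq_zero
    (definedOver_singleton L ⟨invEquation L, map_invEquation _⟩ isWeightedHomogeneous_invEquation)
    ![x, x⁻¹] (by simp [invEquation, hx])
  have h0 : Projectivization.mk K (u 0) (hu 0) = pt 0 := (hmk 0).trans hx0
  have h1 : Projectivization.mk K (u 1) (hu 1) = π (pt x⁻¹) := hmk 1
  have hu00 : u 0 0 = 0 := (P1.mk_eq_pt_zero_iff _).1 h0
  have hu01 : u 0 1 ≠ 0 := fun h => hu 0 (funext (Fin.forall_fin_two.2 ⟨hu00, h⟩))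
  have hu1 : u 0 1 * u 1 1 = 0 := by
    simp only [invEquation, map_sub, map_mul, eval_X] at heval
    linear_combination -heval + u 1 0 * hu00
  rw [← h1, P1.mk_eq_inftyPt_iff]
  simpa [hu01] using hu1

end IsSpecialisation

end

/-- If a specialisation `π₁ : P¹(K) → P¹(L)` is not injective on affine points (there are
distinct `x, y` with `π₁([x:1]) = π₁([y:1]) ≠ [1:0]`), then
`O_K = {x : π₁([x:1]) ≠ [1:0]}` is a proper subset of `K`. -/
theorem specialisation_proper {K : Type*} [Field K] (L : Subfield K)
    (π : P1 K → P1 K) (hπ : IsSpecialisation L π)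
    (hnt : ∃ x y : K, x ≠ y ∧ π (pt x) = π (pt y) ∧ π (pt x) ≠ inftyPt K) :
    {x : K | π (pt x) ≠ inftyPt K} ≠ Set.univ := by
  obtain ⟨x, y, hne, hxy, hx⟩ := hnt
  have hsub := hπ.apply_pt_sub_eq_pt_zero hxy hx
  have hinv := hπ.apply_pt_inv_eq_inftyPt (sub_ne_zero.2 hne) hsub
  exact Set.ne_univ_iff_exists_notMem _ |>.2 ⟨(x - y)⁻¹, fun h => h hinv⟩
end

section
/- There is a bijection between (equivalence classes of) Krull valuations v on K with residue field L (via a fixed section L ⊆ O_v) and specialisations π : P(K) → P(L): the map sending v to the coordinatewise residue specialisation π_v, and the map sending π to the valuation with valuation ring O_K = {x : π₁([x:1]) ≠ [1:0]}, are mutually inverse. -/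
/-!
A valuation ring `O ⊇ L` with residue map `res : O → L` specialises `[x] ∈ P^n(K)` to
`[res (x_i / x_j)]_i`, where `x_j` has maximal valuation; since the equations are multihomogeneous
with coefficients fixed by `res`, closed subvarieties over `L` are preserved. Conversely, the graphs
of `+`, `·` and `x ↦ x⁻¹` on `P¹` are closed subvarieties defined over the prime field, so `π₁`
respects them: `{x : π₁[x:1] ≠ [1:0]}` is a valuation ring, and `π₁[x:1] = [res x : 1]` on it.
The constructions are mutually inverse: a point `[v] ∈ P^n` is tied to the points `[v_i / v_j : 1]`,
embedded in `P^n` by zero padding, by the bilinear relations `X₁₁ X₀ᵢ = X₁₀ X₀ⱼ`, so `π_n` is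
determined by `π₁`.
-/

/-- Projective `n`-space over `K`. -/
abbrev Pn (K : Type*) [Field K] (n : ℕ) := Projectivization K (Fin (n + 1) → K)

/-- A point of `P^n(K)` lies in `P^n(L)`. -/
def InLn {K : Type*} [Field K] (L : Subfield K) {n : ℕ} (p : Pn K n) : Prop :=
  ∃ (x : Fin (n + 1) → K) (hx : x ≠ 0), (∀ i, x i ∈ L) ∧ p = Projectivization.mk K x hx

/-- A closed subvariety of `(P^n)^m` defined over `L`: a family of multi-homogeneous
polynomials with coefficients in `L`. -/
def DefinedOverN {K : Type*} [Field K] (L : Subfield K) {n m : ℕ}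
    (S : Set (MvPolynomial (Fin m × Fin (n + 1)) K)) : Prop :=
  ∀ p ∈ S, (∀ mon, MvPolynomial.coeff mon p ∈ L) ∧
    ∃ d : Fin m → ℕ,
      MvPolynomial.IsWeightedHomogeneous (fun q : Fin m × Fin (n + 1) => Pi.single q.1 1) p d

/-- A tuple of points of `P^n(K)` lies on the subvariety cut out by `S`. -/
def VanishesN {K : Type*} [Field K] {n m : ℕ}
    (S : Set (MvPolynomial (Fin m × Fin (n + 1)) K)) (a : Fin m → Pn K n) : Prop :=
  ∃ x : Fin m → Fin (n + 1) → K,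
    (∀ k, ∃ h : x k ≠ 0, Projectivization.mk K (x k) h = a k) ∧
    ∀ p ∈ S, MvPolynomial.eval (fun q : Fin m × Fin (n + 1) => x q.1 q.2) p = 0

theorem snoc_ne_zero {K : Type*} [Field K] {n : ℕ} {x : Fin (n + 1) → K} (hx : x ≠ 0) :
    (Fin.snoc x (0 : K) : Fin (n + 2) → K) ≠ 0 :=
  fun h => hx (funext fun i => by simpa using congrFun h i.castSucc)

/-- A specialisation `π : P(K) → P(L)`: a compatible family of maps `π_n : P^n(K) → P^n(L)`
preserving all closed subvarieties of Cartesian powers of `P^n` defined over `L` and commuting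
with the standard embeddings `P^n ↪ P^{n+1}`. -/
structure Specialisation (K : Type*) [Field K] (L : Subfield K) where
  toFun : ∀ n, Pn K n → Pn K n
  mem_L : ∀ n p, InLn L (toFun n p)
  fixes : ∀ n p, InLn L p → toFun n p = p
  preserves : ∀ (n m : ℕ) (S : Set (MvPolynomial (Fin m × Fin (n + 1)) K)),
    DefinedOverN L S → ∀ a : Fin m → Pn K n, VanishesN S a → VanishesN S (toFun n ∘ a)
  compat : ∀ (n : ℕ) (x : Fin (n + 1) → K) (hx : x ≠ 0),
    ∃ (y : Fin (n + 1) → K) (hy : y ≠ 0),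
      toFun n (Projectivization.mk K x hx) = Projectivization.mk K y hy ∧
      toFun (n + 1) (Projectivization.mk K (Fin.snoc x 0) (snoc_ne_zero hx)) =
        Projectivization.mk K (Fin.snoc y 0) (snoc_ne_zero hy)

/-- A Krull valuation on `K` with residue field `L` (via a fixed section `L ⊆ O_v`), given up
to equivalence by its valuation ring `O`: a subring such that `x ∈ O` or `x⁻¹ ∈ O` for each
nonzero `x`, containing `L`, such that `L` maps isomorphically onto the residue field, i.e.
every `k ∈ O` is congruent to a unique element of `L` modulo the maximal ideal
`M = {m ∈ O : m = 0 ∨ m⁻¹ ∉ O}`. -/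
structure KrullData (K : Type*) [Field K] (L : Subfield K) where
  O : Subring K
  mem_or_inv : ∀ x : K, x ≠ 0 → x ∈ O ∨ x⁻¹ ∈ O
  L_le : (L : Set K) ⊆ (O : Set K)
  residue : ∀ k ∈ O, ∃! l : K, l ∈ L ∧ (k - l ∈ O ∧ (k - l = 0 ∨ (k - l)⁻¹ ∉ O))

/-- The point `[x : 1]` of `P¹(K)`. -/
def ptK {K : Type*} [Field K] (x : K) : Pn K 1 :=
  Projectivization.mk K ![x, 1] (by intro h; simpa using congrFun h 1)

/-- The point `[1 : 0]` of `P¹(K)`. -/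
def inftyPtK (K : Type*) [Field K] : Pn K 1 :=
  Projectivization.mk K ![1, 0] (by intro h; simpa using congrFun h 0)

open MvPolynomial

section ProjectiveSpace

open Projectivization

variable {K : Type*} [Field K]

lemma mk_eq_ptK_iff {z : Fin 2 → K} (hz : z ≠ 0) (a : K) :
    mk K z hz = ptK a ↔ z 0 = a * z 1 := by
  rw [ptK, mk_eq_mk_iff']
  constructor
  · rintro ⟨c, rfl⟩
    simp [mul_comm]
  · intro h
    refine ⟨z 1, funext fun i => ?_⟩
    fin_cases i <;> simp [h, mul_comm]

lemma mk_eq_inftyPtK_iff {z : Fin 2 → K} (hz : z ≠ 0) : mk K z hz = inftyPtK K ↔ z 1 = 0 := by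
  rw [inftyPtK, mk_eq_mk_iff']
  constructor
  · rintro ⟨c, rfl⟩
    simp
  · intro h
    refine ⟨z 0, funext fun i => ?_⟩
    fin_cases i <;> simp [h]

lemma ptK_ne_inftyPtK (a : K) : ptK a ≠ inftyPtK K := by
  rw [ptK, Ne, mk_eq_inftyPtK_iff]
  simp

lemma ptK_injective : Function.Injective (ptK : K → Pn K 1) := fun a b h => by
  rw [ptK, mk_eq_ptK_iff] at h
  simpa using h

lemma inLn_ptK {L : Subfield K} {l : K} (hl : l ∈ L) : InLn L (ptK l) :=
  ⟨![l, 1], Function.ne_iff.2 ⟨1, by simp⟩, fun i => by fin_cases i <;> simp [hl], rfl⟩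

lemma eq_inftyPtK_or_exists_eq_ptK {L : Subfield K} {p : Pn K 1} (hp : InLn L p) :
    p = inftyPtK K ∨ ∃ l ∈ L, p = ptK l := by
  obtain ⟨y, hy, hyL, rfl⟩ := hp
  by_cases h1 : y 1 = 0
  · exact Or.inl ((mk_eq_inftyPtK_iff hy).2 h1)
  · refine Or.inr ⟨y 0 / y 1, div_mem (hyL 0) (hyL 1), (mk_eq_ptK_iff hy _).2 ?_⟩
    field_simp

instance : Subsingleton (Pn K 0) := by
  refine ⟨fun p q => ?_⟩
  induction p using Projectivization.ind with | h x hx =>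
  induction q using Projectivization.ind with | h y hy =>
  have h0 : ∀ {v : Fin 1 → K}, v ≠ 0 → v 0 ≠ 0 := fun hv h =>
    hv (funext fun i => by rwa [Fin.fin_one_eq_zero i])
  rw [mk_eq_mk_iff']
  refine ⟨x 0 / y 0, funext fun i => ?_⟩
  rw [Fin.fin_one_eq_zero i]
  simp [h0 hy]

def padZeros : (t : ℕ) → (Fin 2 → K) → Fin (t + 2) → K
  | 0, v => v
  | t + 1, v => Fin.snoc (padZeros t v) 0

lemma padZeros_ne_zero {v : Fin 2 → K} (hv : v ≠ 0) : ∀ t, padZeros t v ≠ 0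
  | 0 => hv
  | t + 1 => snoc_ne_zero (padZeros_ne_zero hv t)

@[simp]
lemma padZeros_apply_zero (t : ℕ) (v : Fin 2 → K) : padZeros t v 0 = v 0 := by
  induction t with
  | zero => rfl
  | succ t ih =>
    show (Fin.snoc (padZeros t v) 0 : Fin (t + 3) → K) (Fin.castSucc 0) = v 0
    rw [Fin.snoc_castSucc, ih]

@[simp]
lemma padZeros_apply_one (t : ℕ) (v : Fin 2 → K) : padZeros t v 1 = v 1 := by
  induction t with
  | zero => rfl
  | succ t ih =>
    show (Fin.snoc (padZeros t v) 0 : Fin (t + 3) → K) (Fin.castSucc 1) = v 1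
    rw [Fin.snoc_castSucc, ih]

lemma mk_snoc_zero_eq {n : ℕ} {x y : Fin (n + 1) → K} (hx : x ≠ 0) (hy : y ≠ 0)
    (h : mk K x hx = mk K y hy) :
    mk K (Fin.snoc x 0 : Fin (n + 2) → K) (snoc_ne_zero hx) =
      mk K (Fin.snoc y 0 : Fin (n + 2) → K) (snoc_ne_zero hy) := by
  obtain ⟨c, rfl⟩ := (mk_eq_mk_iff' K _ _ hx hy).1 h
  refine (mk_eq_mk_iff' K _ _ _ _).2 ⟨c, funext fun i => ?_⟩
  refine Fin.lastCases ?_ (fun i => ?_) i <;> simp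

end ProjectiveSpace

lemma MvPolynomial.IsWeightedHomogeneous.eval_mul_left {R ι κ : Type*} [CommSemiring R]
    [Fintype ι] [DecidableEq ι] [Fintype κ] {p : MvPolynomial (ι × κ) R} {d : ι → ℕ}
    (hp : p.IsWeightedHomogeneous (fun q => Pi.single q.1 1) d) (c : ι → R) (x : ι × κ → R) :
    eval (fun q => c q.1 * x q) p = (∏ k, c k ^ d k) * eval x p := by
  induction hp using IsWeightedHomogeneous.induction_on with
  | zero => simp
  | add p q _ _ hp hq => rw [map_add, map_add, hp, hq, mul_add]
  | monomial e r he =>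
    have hweight : ∀ k, d k = ∑ q, if q.1 = k then e q else 0 := fun k => by
      simp [← he, Finsupp.weight_eq_sum, Finset.sum_apply, Pi.single_apply, eq_comm]
    have hc : ∏ k, c k ^ d k = ∏ q, c q.1 ^ e q := by
      simp_rw [hweight, ← Finset.prod_pow_eq_pow_sum, pow_ite, pow_zero]
      rw [Finset.prod_comm]
      simp
    rw [eval_monomial, eval_monomial, Finsupp.prod_fintype _ _ (fun _ => pow_zero _),
      Finsupp.prod_fintype _ _ (fun _ => pow_zero _), hc]
    simp only [mul_pow, Finset.prod_mul_distrib]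
    ring

lemma MvPolynomial.IsWeightedHomogeneous.map {R S σ M : Type*} [CommSemiring R] [CommSemiring S]
    [AddCommMonoid M] {w : σ → M} {p : MvPolynomial σ R} {m : M}
    (hp : p.IsWeightedHomogeneous w m) (f : R →+* S) : (map f p).IsWeightedHomogeneous w m :=
  fun d hd => hp fun h => hd (by rw [coeff_map, h, map_zero])

lemma MvPolynomial.IsWeightedHomogeneous.eval_eq_zero_of_mk_eq {K ι κ : Type*} [Field K]
    [Fintype ι] [DecidableEq ι] [Fintype κ] {p : MvPolynomial (ι × κ) K} {d : ι → ℕ}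
    (hp : p.IsWeightedHomogeneous (fun q => Pi.single q.1 1) d) {x y : ι → κ → K}
    (hx : ∀ k, x k ≠ 0) (hy : ∀ k, y k ≠ 0)
    (hxy : ∀ k, Projectivization.mk K (x k) (hx k) = Projectivization.mk K (y k) (hy k))
    (h : eval (fun q => x q.1 q.2) p = 0) : eval (fun q => y q.1 q.2) p = 0 := by
  choose c hc using fun k => (Projectivization.mk_eq_mk_iff' K _ _ _ _).1 (hxy k).symm
  have hyx : (fun q : ι × κ => y q.1 q.2) = fun q => c q.1 * x q.1 q.2 := by
    funext q
    rw [← hc q.1]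
    rfl
  rw [hyx, hp.eval_mul_left, h, mul_zero]

namespace KrullData

variable {K : Type*} [Field K] {L : Subfield K} (V : KrullData K L)

def valuationSubring : ValuationSubring K :=
  .ofSubring V.O fun x => (eq_or_ne x 0).elim (fun h => Or.inl (h ▸ V.O.zero_mem))
    (V.mem_or_inv x)

@[simp]
lemma mem_valuationSubring {x : K} : x ∈ V.valuationSubring ↔ x ∈ V.O := Iff.rfl

lemma mem_nonunits_iff {m : K} :
    m ∈ V.valuationSubring.nonunits ↔ m ∈ V.O ∧ (m = 0 ∨ m⁻¹ ∉ V.O) := by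
  rw [ValuationSubring.mem_nonunits_iff_or]
  refine ⟨fun h => ⟨?_, h⟩, And.right⟩
  rcases h with rfl | h
  · exact V.O.zero_mem
  · exact (V.mem_or_inv m (by rintro rfl; simp at h)).resolve_right h

def inclusion : L →+* V.valuationSubring :=
  L.subtype.codRestrict V.valuationSubring.toSubring fun l => V.L_le l.2

lemma residue_inclusion_surjective :
    Function.Surjective ((IsLocalRing.residue V.valuationSubring).comp V.inclusion) := by
  intro r
  obtain ⟨a, rfl⟩ := IsLocalRing.residue_surjective r
  obtain ⟨l, ⟨hl, hsub⟩, -⟩ := V.residue a a.2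
  refine ⟨⟨l, hl⟩, (sub_eq_zero.1 ?_).symm⟩
  rw [RingHom.comp_apply, ← map_sub, IsLocalRing.residue_eq_zero_iff,
    ← ValuationSubring.coe_mem_nonunits_iff, V.mem_nonunits_iff]
  exact hsub

noncomputable def residueEquiv : L ≃+* IsLocalRing.ResidueField V.valuationSubring :=
  .ofBijective _ ⟨RingHom.injective _, V.residue_inclusion_surjective⟩

noncomputable def residueMap : V.valuationSubring →+* K :=
  L.subtype.comp (V.residueEquiv.symm.toRingHom.comp (IsLocalRing.residue _))

lemma residueMap_mem (a : V.valuationSubring) : V.residueMap a ∈ L :=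
  (V.residueEquiv.symm _).2

lemma residueMap_comp_inclusion : V.residueMap.comp V.inclusion = L.subtype := by
  ext l
  exact congrArg Subtype.val (V.residueEquiv.symm_apply_apply l)

lemma residueMap_of_mem {l : K} (hl : l ∈ L) : V.residueMap ⟨l, V.L_le hl⟩ = l :=
  RingHom.congr_fun V.residueMap_comp_inclusion ⟨l, hl⟩

lemma residueMap_eq_zero_iff (a : V.valuationSubring) :
    V.residueMap a = 0 ↔ (a : K) ∈ V.valuationSubring.nonunits := by
  simp [residueMap, ValuationSubring.coe_mem_nonunits_iff, IsLocalRing.residue_eq_zero_iff]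

lemma residueMap_eq_iff (a : V.valuationSubring) {l : K} (hl : l ∈ L) :
    V.residueMap a = l ↔ (a : K) - l ∈ V.valuationSubring.nonunits := by
  have h := V.residueMap_eq_zero_iff (a - ⟨l, V.L_le hl⟩)
  rwa [map_sub, V.residueMap_of_mem hl, sub_eq_zero] at h

def IsPivot {ι : Type*} (x : ι → K) (j : ι) : Prop :=
  x j ≠ 0 ∧ ∀ i, x i / x j ∈ V.O

noncomputable def resVec {ι : Type*} {x : ι → K} {j : ι} (hj : V.IsPivot x j) : ι → K :=
  fun i => V.residueMap ⟨x i / x j, hj.2 i⟩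

variable {V}

lemma eval_residueMap_eq_zero {σ : Type*} {p : MvPolynomial σ K} (hp : ∀ mon, p.coeff mon ∈ L)
    {y : σ → V.valuationSubring} (h : eval (fun q => (y q : K)) p = 0) :
    eval (fun q => V.residueMap (y q)) p = 0 := by
  obtain ⟨pL, rfl⟩ : p ∈ Set.range (map L.subtype) := by
    rw [mem_range_map_iff_coeffs_subset]
    intro c hc
    obtain ⟨mon, -, rfl⟩ := mem_coeffs_iff.1 hc
    exact ⟨⟨_, hp mon⟩, rfl⟩
  rw [eval_map] at h ⊢
  have hA : eval₂ V.inclusion y pL = 0 :=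
    Subtype.val_injective ((eval₂_comp_left V.valuationSubring.subtype V.inclusion y pL).trans h)
  rw [← V.residueMap_comp_inclusion]
  exact (eval₂_comp_left V.residueMap V.inclusion y pL).symm.trans (by rw [hA, map_zero])

lemma exists_isPivot {ι : Type*} [Finite ι] {x : ι → K} (hx : x ≠ 0) : ∃ j, V.IsPivot x j := by
  obtain ⟨i₀, hi₀⟩ := Function.ne_iff.1 hx
  have : Nonempty ι := ⟨i₀⟩
  obtain ⟨j, hj⟩ := Finite.exists_max (V.valuationSubring.valuation ∘ x)
  have hxj : x j ≠ 0 := fun h => hi₀ (by simpa [h] using hj i₀)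
  refine ⟨j, hxj, fun i => ?_⟩
  rw [← mem_valuationSubring, ← ValuationSubring.valuation_le_one_iff, map_div₀,
    div_le_one₀ (V.valuationSubring.valuation.pos_iff.2 hxj)]
  exact hj i

lemma resVec_apply_pivot {ι : Type*} {x : ι → K} {j : ι} (hj : V.IsPivot x j) :
    V.resVec hj j = 1 := by
  rw [resVec, ← V.residueMap.map_one]
  exact congrArg V.residueMap (Subtype.ext (div_self hj.1))

lemma resVec_ne_zero {ι : Type*} {x : ι → K} {j : ι} (hj : V.IsPivot x j) : V.resVec hj ≠ 0 :=
  Function.ne_iff.2 ⟨j, by simp [resVec_apply_pivot]⟩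

lemma mk_resVec_eq {n : ℕ} {x y : Fin (n + 1) → K} {j k : Fin (n + 1)} (hxj : V.IsPivot x j)
    (hyk : V.IsPivot y k) (hx : x ≠ 0) (hy : y ≠ 0)
    (h : Projectivization.mk K x hx = Projectivization.mk K y hy) :
    Projectivization.mk K (V.resVec hxj) (resVec_ne_zero hxj) =
      Projectivization.mk K (V.resVec hyk) (resVec_ne_zero hyk) := by
  obtain ⟨c, rfl⟩ := (Projectivization.mk_eq_mk_iff' K x y hx hy).1 h
  have hc : c ≠ 0 := by rintro rfl; exact hxj.1 (by simp)
  have hyj : y j ≠ 0 := by simpa [hc] using hxj.1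
  have hkj : y k / y j ∈ V.O := by simpa [hc, mul_div_mul_left] using hxj.2 k
  refine (Projectivization.mk_eq_mk_iff' K _ _ _ _).2 ⟨V.residueMap ⟨_, hkj⟩, funext fun i => ?_⟩
  rw [Pi.smul_apply, smul_eq_mul, resVec, resVec, ← map_mul]
  congr 1
  ext
  simp only [MulMemClass.coe_mul, Pi.smul_apply, smul_eq_mul]
  field_simp [hyk.1]

variable (V) in
noncomputable def specialise {n : ℕ} (p : Pn K n) : Pn K n :=
  Projectivization.mk K (V.resVec (exists_isPivot p.rep_nonzero).choose_spec)
    (resVec_ne_zero (exists_isPivot p.rep_nonzero).choose_spec)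

lemma specialise_mk {n : ℕ} {x : Fin (n + 1) → K} (hx : x ≠ 0) {j : Fin (n + 1)}
    (hj : V.IsPivot x j) :
    V.specialise (Projectivization.mk K x hx) =
      Projectivization.mk K (V.resVec hj) (resVec_ne_zero hj) :=
  mk_resVec_eq _ _ _ hx (Projectivization.mk_rep _)

lemma specialise_of_inLn {n : ℕ} {p : Pn K n} (hp : InLn L p) : V.specialise p = p := by
  obtain ⟨y, hy, hyL, rfl⟩ := hp
  obtain ⟨j, hj⟩ := Function.ne_iff.1 hy
  have hpiv : V.IsPivot y j := ⟨hj, fun i => V.L_le (div_mem (hyL i) (hyL j))⟩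
  rw [specialise_mk hy hpiv, Projectivization.mk_eq_mk_iff']
  exact ⟨(y j)⁻¹, funext fun i =>
    ((V.residueMap_of_mem (div_mem (hyL i) (hyL j))).trans (div_eq_inv_mul _ _)).symm⟩

lemma specialise_preserves {n m : ℕ} {S : Set (MvPolynomial (Fin m × Fin (n + 1)) K)}
    (hS : DefinedOverN L S) {a : Fin m → Pn K n} (ha : VanishesN S a) :
    VanishesN S (V.specialise ∘ a) := by
  obtain ⟨x, hxa, hx⟩ := ha
  choose hx0 hxa using hxa
  choose j hj using fun k => exists_isPivot (V := V) (hx0 k)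
  refine ⟨fun k => V.resVec (hj k), fun k => ⟨resVec_ne_zero (hj k), ?_⟩, fun p hp => ?_⟩
  · rw [Function.comp_apply, ← hxa k, specialise_mk (hx0 k) (hj k)]
  obtain ⟨hcoeff, d, hd⟩ := hS p hp
  refine eval_residueMap_eq_zero hcoeff (y := fun q => ⟨_, (hj q.1).2 q.2⟩) ?_
  simp only [div_eq_inv_mul]
  rw [hd.eval_mul_left (fun k => (x k (j k))⁻¹) (fun q => x q.1 q.2), hx p hp, mul_zero]

lemma specialise_snoc {n : ℕ} {x : Fin (n + 1) → K} (hx : x ≠ 0) {j : Fin (n + 1)}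
    (hj : V.IsPivot x j) :
    V.specialise (Projectivization.mk K (Fin.snoc x 0) (snoc_ne_zero hx)) =
      Projectivization.mk K (Fin.snoc (V.resVec hj) 0) (snoc_ne_zero (resVec_ne_zero hj)) := by
  have hj' : V.IsPivot (Fin.snoc x 0 : Fin (n + 2) → K) j.castSucc := by
    refine ⟨by simpa using hj.1, Fin.lastCases ?_ fun i => ?_⟩
    · simp
    · simpa using hj.2 i
  rw [specialise_mk _ hj']
  congr 1
  funext i
  refine Fin.lastCases ?_ (fun i => ?_) i
  · simp only [resVec, Fin.snoc_last, zero_div]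
    exact map_zero _
  · simp [resVec]

variable (V) in
noncomputable def toSpecialisation : Specialisation K L where
  toFun _ := V.specialise
  mem_L _ _ := ⟨_, _, fun _ => V.residueMap_mem _, rfl⟩
  fixes _ _ := specialise_of_inLn
  preserves _ _ _ hS _ := specialise_preserves hS
  compat _ _ hx :=
    have hj := (exists_isPivot (V := V) hx).choose_spec
    ⟨_, resVec_ne_zero hj, specialise_mk hx hj, specialise_snoc hx hj⟩

lemma mem_O_iff_specialise_ptK_ne (x : K) : x ∈ V.O ↔ V.specialise (ptK x) ≠ inftyPtK K := by
  by_cases hx : x ∈ V.O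
  · have hpiv : V.IsPivot ![x, 1] 1 := ⟨by simp, fun i => by fin_cases i <;> simp [hx]⟩
    rw [ptK, specialise_mk _ hpiv, Ne, mk_eq_inftyPtK_iff, resVec_apply_pivot]
    simp [hx]
  · have hx0 : x ≠ 0 := by rintro rfl; exact hx V.O.zero_mem
    have hinv : x⁻¹ ∈ V.O := (V.mem_or_inv x hx0).resolve_left hx
    have hpiv : V.IsPivot ![x, 1] 0 :=
      ⟨by simpa using hx0, fun i => by fin_cases i <;> simp [hx0, hinv, V.O.one_mem]⟩
    rw [ptK, specialise_mk _ hpiv, Ne, mk_eq_inftyPtK_iff, resVec, residueMap_eq_zero_iff,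
      mem_nonunits_iff]
    simpa [hx] using hinv

lemma ext {V W : KrullData K L} (h : V.O = W.O) : V = W := by
  cases V
  cases W
  cases h
  rfl

end KrullData

namespace Specialisation

variable {K : Type*} [Field K] {L : Subfield K} (π : Specialisation K L)

lemma aeval_eq_zero {m n : ℕ} {P : MvPolynomial (Fin m × Fin (n + 1)) ℤ} {d : Fin m → ℕ}
    (hP : P.IsWeightedHomogeneous (fun q => Pi.single q.1 1) d) {x z : Fin m → Fin (n + 1) → K}
    (hx : ∀ k, x k ≠ 0) (hz : ∀ k, z k ≠ 0)
    (hxz : ∀ k, π.toFun n (Projectivization.mk K (x k) (hx k)) =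
      Projectivization.mk K (z k) (hz k))
    (h : aeval (fun q => x q.1 q.2) P = 0) : aeval (fun q => z q.1 q.2) P = 0 := by
  rw [aeval_def, ← eval_map] at h ⊢
  have hdef : DefinedOverN L {map (algebraMap ℤ K) P} := by
    rintro p rfl
    exact ⟨fun mon => by simp [coeff_map, intCast_mem], d, hP.map _⟩
  obtain ⟨y, hya, hy⟩ := π.preserves n m _ hdef _ ⟨x, fun k => ⟨hx k, rfl⟩, by simpa using h⟩
  choose hy0 hya using hya
  exact (hP.map _).eval_eq_zero_of_mk_eq hy0 hz (fun k => (hya k).trans (hxz k)) (hy _ rfl)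

lemma map_ptK_of_mem {l : K} (hl : l ∈ L) : π.toFun 1 (ptK l) = ptK l :=
  π.fixes 1 _ (inLn_ptK hl)

lemma map_ptK_of_graph {P : MvPolynomial (Fin 3 × Fin 2) ℤ} {d : Fin 3 → ℕ}
    (hP : P.IsWeightedHomogeneous (fun q => Pi.single q.1 1) d) (f : K → K → K)
    (hf : ∀ a b : K, ∀ z : Fin 2 → K,
      aeval (fun q => (![![a, 1], ![b, 1], z] : Fin 3 → Fin 2 → K) q.1 q.2) P = f a b * z 1 - z 0)
    {s t α β : K} (hs : π.toFun 1 (ptK s) = ptK α) (ht : π.toFun 1 (ptK t) = ptK β) :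
    π.toFun 1 (ptK (f s t)) = ptK (f α β) := by
  set w := (π.toFun 1 (ptK (f s t))).rep
  have hx : ∀ k, (![![s, 1], ![t, 1], ![f s t, 1]] : Fin 3 → Fin 2 → K) k ≠ 0 := fun k => by
    fin_cases k <;> exact Function.ne_iff.2 ⟨1, by simp⟩
  have hz : ∀ k, (![![α, 1], ![β, 1], w] : Fin 3 → Fin 2 → K) k ≠ 0 := fun k => by
    fin_cases k
    exacts [Function.ne_iff.2 ⟨1, by simp⟩, Function.ne_iff.2 ⟨1, by simp⟩,
      Projectivization.rep_nonzero _]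
  have hw := π.aeval_eq_zero hP hx hz (fun k => by
    fin_cases k
    exacts [hs, ht, (Projectivization.mk_rep _).symm]) (by rw [hf]; simp)
  rw [← Projectivization.mk_rep (π.toFun 1 (ptK (f s t))), mk_eq_ptK_iff]
  exact (sub_eq_zero.1 ((hf α β w).symm.trans hw)).symm

variable {π}

lemma map_ptK_add {s t α β : K} (hs : π.toFun 1 (ptK s) = ptK α)
    (ht : π.toFun 1 (ptK t) = ptK β) : π.toFun 1 (ptK (s + t)) = ptK (α + β) := by
  refine π.map_ptK_of_graph (P := X (0, 0) * X (1, 1) * X (2, 1) + X (0, 1) * X (1, 0) * X (2, 1)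
    - X (0, 1) * X (1, 1) * X (2, 0)) (d := Pi.single 0 1 + Pi.single 1 1 + Pi.single 2 1)
    ?_ (· + ·) (fun a b z => ?_) hs ht
  · refine .sub (.add ?_ ?_) ?_ <;> exact ((isWeightedHomogeneous_X _ _ _).mul
      (isWeightedHomogeneous_X _ _ _)).mul (isWeightedHomogeneous_X _ _ _)
  · simp [add_mul]

lemma map_ptK_mul {s t α β : K} (hs : π.toFun 1 (ptK s) = ptK α)
    (ht : π.toFun 1 (ptK t) = ptK β) : π.toFun 1 (ptK (s * t)) = ptK (α * β) := by
  refine π.map_ptK_of_graph (P := X (0, 0) * X (1, 0) * X (2, 1) - X (0, 1) * X (1, 1) * X (2, 0))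
    (d := Pi.single 0 1 + Pi.single 1 1 + Pi.single 2 1) ?_ (· * ·) (fun a b z => ?_) hs ht
  · refine .sub ?_ ?_ <;> exact ((isWeightedHomogeneous_X _ _ _).mul
      (isWeightedHomogeneous_X _ _ _)).mul (isWeightedHomogeneous_X _ _ _)
  · simp

lemma map_ptK_neg {s α : K} (hs : π.toFun 1 (ptK s) = ptK α) :
    π.toFun 1 (ptK (-s)) = ptK (-α) := by
  simpa using map_ptK_mul hs (π.map_ptK_of_mem (neg_mem (one_mem L)))

lemma map_ptK_sub {s α l : K} (hs : π.toFun 1 (ptK s) = ptK α) (hl : l ∈ L) :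
    π.toFun 1 (ptK (s - l)) = ptK (α - l) := by
  simpa [sub_eq_add_neg] using map_ptK_add hs (π.map_ptK_of_mem (neg_mem hl))

variable (π) in
lemma map_ptK_eq_inftyPtK_iff {s : K} (hs : s ≠ 0) :
    π.toFun 1 (ptK s) = inftyPtK K ↔ π.toFun 1 (ptK s⁻¹) = ptK 0 := by
  rw [← Projectivization.mk_rep (π.toFun 1 (ptK s)), mk_eq_inftyPtK_iff,
    ← Projectivization.mk_rep (π.toFun 1 (ptK s⁻¹)), mk_eq_ptK_iff, zero_mul]
  set u := (π.toFun 1 (ptK s)).rep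
  set w := (π.toFun 1 (ptK s⁻¹)).rep
  have hx : ∀ k, (![![s, 1], ![s⁻¹, 1]] : Fin 2 → Fin 2 → K) k ≠ 0 := fun k => by
    fin_cases k <;> exact Function.ne_iff.2 ⟨1, by simp⟩
  have hz : ∀ k, (![u, w] : Fin 2 → Fin 2 → K) k ≠ 0 := fun k => by
    fin_cases k <;> exact Projectivization.rep_nonzero _
  -- `X₀₀ X₁₀ = X₀₁ X₁₁` cuts out the graph of `[a : b] ↦ [b : a]`.
  have hrel := π.aeval_eq_zero (P := X (0, 0) * X (1, 0) - X (0, 1) * X (1, 1))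
    (.sub ((isWeightedHomogeneous_X _ _ _).mul (isWeightedHomogeneous_X _ _ _))
      ((isWeightedHomogeneous_X _ _ _).mul (isWeightedHomogeneous_X _ _ _))) hx hz
    (fun k => by fin_cases k <;> exact (Projectivization.mk_rep _).symm) (by simp [hs])
  replace hrel : u 0 * w 0 = u 1 * w 1 := by simpa [sub_eq_zero] using hrel
  have hu : u 0 ≠ 0 ∨ u 1 ≠ 0 := by simpa [Function.ne_iff, Fin.exists_fin_two] using hz 0
  have hw : w 0 ≠ 0 ∨ w 1 ≠ 0 := by simpa [Function.ne_iff, Fin.exists_fin_two] using hz 1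
  constructor
  · intro h1
    simpa [h1, hu.resolve_right (not_not.2 h1)] using hrel
  · intro h0
    simpa [h0, hw.resolve_left (not_not.2 h0)] using hrel.symm

variable (π) in
def valuationRing : Subring K where
  carrier := {x | ∃ α ∈ L, π.toFun 1 (ptK x) = ptK α}
  zero_mem' := ⟨0, zero_mem L, π.map_ptK_of_mem (zero_mem L)⟩
  one_mem' := ⟨1, one_mem L, π.map_ptK_of_mem (one_mem L)⟩
  add_mem' := fun ⟨α, hα, hs⟩ ⟨β, hβ, ht⟩ => ⟨α + β, add_mem hα hβ, map_ptK_add hs ht⟩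
  mul_mem' := fun ⟨α, hα, hs⟩ ⟨β, hβ, ht⟩ => ⟨α * β, mul_mem hα hβ, map_ptK_mul hs ht⟩
  neg_mem' := fun ⟨α, hα, hs⟩ => ⟨-α, neg_mem hα, map_ptK_neg hs⟩

lemma mem_valuationRing_iff {x : K} :
    x ∈ π.valuationRing ↔ π.toFun 1 (ptK x) ≠ inftyPtK K := by
  refine ⟨fun ⟨α, _, h⟩ => h ▸ ptK_ne_inftyPtK α, fun h => ?_⟩
  exact (eq_inftyPtK_or_exists_eq_ptK (π.mem_L 1 (ptK x))).resolve_left h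

lemma map_ptK_eq_zero_iff {m : K} :
    π.toFun 1 (ptK m) = ptK 0 ↔ m ∈ π.valuationRing ∧ (m = 0 ∨ m⁻¹ ∉ π.valuationRing) := by
  rcases eq_or_ne m 0 with rfl | hm
  · simpa using π.map_ptK_of_mem (zero_mem L)
  rw [mem_valuationRing_iff (x := m⁻¹), not_not, map_ptK_eq_inftyPtK_iff π (inv_ne_zero hm),
    inv_inv]
  exact ⟨fun h => ⟨⟨0, zero_mem L, h⟩, Or.inr h⟩, fun h => h.2.resolve_left hm⟩

variable (π) in
def toKrullData : KrullData K L where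
  O := π.valuationRing
  mem_or_inv x hx := by
    by_cases h : π.toFun 1 (ptK x) = inftyPtK K
    · exact Or.inr ⟨0, zero_mem L, (π.map_ptK_eq_inftyPtK_iff hx).1 h⟩
    · exact Or.inl (mem_valuationRing_iff.2 h)
  L_le l hl := ⟨l, hl, π.map_ptK_of_mem hl⟩
  residue k := fun ⟨α, hα, hk⟩ => by
    have key : ∀ l ∈ L, (k - l ∈ π.valuationRing ∧
        (k - l = 0 ∨ (k - l)⁻¹ ∉ π.valuationRing)) ↔ l = α := fun l hl => by
      rw [← map_ptK_eq_zero_iff, map_ptK_sub hk hl, ptK_injective.eq_iff, sub_eq_zero, eq_comm]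
    exact ⟨α, ⟨hα, (key α hα).2 rfl⟩, fun l hl => (key l hl.1).1 hl.2⟩

lemma toKrullData_residueMap (a : π.toKrullData.valuationSubring) {r : K}
    (hs : π.toFun 1 (ptK a) = ptK r) (hr : r ∈ L) : π.toKrullData.residueMap a = r := by
  rw [π.toKrullData.residueMap_eq_iff a hr, KrullData.mem_nonunits_iff]
  exact map_ptK_eq_zero_iff.1 (by simpa using map_ptK_sub hs hr)

lemma toFun_mk_snoc {n : ℕ} {x y : Fin (n + 1) → K} (hx : x ≠ 0) (hy : y ≠ 0)
    (h : π.toFun n (Projectivization.mk K x hx) = Projectivization.mk K y hy) :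
    π.toFun (n + 1) (Projectivization.mk K (Fin.snoc x 0) (snoc_ne_zero hx)) =
      Projectivization.mk K (Fin.snoc y 0) (snoc_ne_zero hy) := by
  obtain ⟨y', hy', h1, h2⟩ := π.compat n x hx
  rw [h2]
  exact mk_snoc_zero_eq _ _ (h1.symm.trans h)

lemma toFun_mk_padZeros {v w : Fin 2 → K} (hv : v ≠ 0) (hw : w ≠ 0)
    (h : π.toFun 1 (Projectivization.mk K v hv) = Projectivization.mk K w hw) :
    ∀ t, π.toFun (t + 1) (Projectivization.mk K (padZeros t v) (padZeros_ne_zero hv t)) =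
      Projectivization.mk K (padZeros t w) (padZeros_ne_zero hw t)
  | 0 => h
  | t + 1 => toFun_mk_snoc _ _ (toFun_mk_padZeros hv hw h t)

lemma eq_mul_of_toFun_mk {t : ℕ} {v y : Fin (t + 2) → K} (hv : v ≠ 0) (hy : y ≠ 0)
    (h : π.toFun (t + 1) (Projectivization.mk K v hv) = Projectivization.mk K y hy)
    {i j : Fin (t + 2)} (hj : v j ≠ 0) {r : K} (hr : π.toFun 1 (ptK (v i / v j)) = ptK r) :
    y i = r * y j := by
  have hx : ∀ k, (![v, padZeros t ![v i / v j, 1]] : Fin 2 → Fin (t + 2) → K) k ≠ 0 := fun k => by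
    fin_cases k
    exacts [hv, padZeros_ne_zero (Function.ne_iff.2 ⟨1, by simp⟩) t]
  have hz : ∀ k, (![y, padZeros t ![r, 1]] : Fin 2 → Fin (t + 2) → K) k ≠ 0 := fun k => by
    fin_cases k
    exacts [hy, padZeros_ne_zero (Function.ne_iff.2 ⟨1, by simp⟩) t]
  have hrel := π.aeval_eq_zero (P := X (1, 1) * X (0, i) - X (1, 0) * X (0, j))
    (.sub ((isWeightedHomogeneous_X _ _ _).mul (isWeightedHomogeneous_X _ _ _))
      ((isWeightedHomogeneous_X _ _ _).mul (isWeightedHomogeneous_X _ _ _))) hx hz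
    (fun k => by
      fin_cases k
      exacts [h, toFun_mk_padZeros _ _ hr t])
    (by simp [hj])
  simpa [sub_eq_zero] using hrel

lemma toKrullData_specialise {t : ℕ} (p : Pn K (t + 1)) :
    π.toKrullData.specialise p = π.toFun (t + 1) p := by
  induction p using Projectivization.ind with | h v hv =>
  obtain ⟨j, hj⟩ := KrullData.exists_isPivot (V := π.toKrullData) hv
  choose r hrL hr using hj.2
  have hres : π.toKrullData.resVec hj = r :=
    funext fun i => toKrullData_residueMap _ (hr i) (hrL i)
  set y := (π.toFun (t + 1) (Projectivization.mk K v hv)).rep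
  have hy : ∀ i, y i = r i * y j := fun i =>
    eq_mul_of_toFun_mk hv (Projectivization.rep_nonzero _) (Projectivization.mk_rep _).symm hj.1
      (hr i)
  rw [KrullData.specialise_mk hv hj, ← Projectivization.mk_rep (π.toFun (t + 1) _)]
  refine ((Projectivization.mk_eq_mk_iff' K _ _ _ _).2 ⟨y j, ?_⟩).symm
  rw [hres]
  exact funext fun i => (mul_comm _ _).trans (hy i).symm

lemma ext {π ρ : Specialisation K L} (h : π.toFun = ρ.toFun) : π = ρ := by
  cases π
  cases ρ
  cases h
  rfl

lemma toKrullData_toSpecialisation (π : Specialisation K L) :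
    π.toKrullData.toSpecialisation = π := by
  refine ext (funext fun n => funext fun p => ?_)
  cases n with
  | zero => exact Subsingleton.elim _ _
  | succ t => exact toKrullData_specialise p

end Specialisation

lemma KrullData.toSpecialisation_toKrullData {K : Type*} [Field K] {L : Subfield K}
    (V : KrullData K L) :
    V.toSpecialisation.toKrullData = V :=
  ext (SetLike.ext fun x => Specialisation.mem_valuationRing_iff.trans
    (mem_O_iff_specialise_ptK_ne x).symm)

/-- There is a bijection between (equivalence classes of) Krull valuations on `K` with residue
field `L` and specialisations `π : P(K) → P(L)`: the valuation attached to a specialisation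
`π` has valuation ring `O_K = {x : π₁([x:1]) ≠ [1:0]}`, and conversely. -/
theorem krull_equiv_specialisation {K : Type*} [Field K] (L : Subfield K) :
    ∃ e : KrullData K L ≃ Specialisation K L,
      (∀ (V : KrullData K L) (x : K), x ∈ V.O ↔ (e V).toFun 1 (ptK x) ≠ inftyPtK K) ∧
      (∀ (π : Specialisation K L) (x : K),
        x ∈ (e.symm π).O ↔ π.toFun 1 (ptK x) ≠ inftyPtK K) :=
  ⟨⟨KrullData.toSpecialisation, Specialisation.toKrullData,
      KrullData.toSpecialisation_toKrullData, Specialisation.toKrullData_toSpecialisation⟩,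
    fun _ => KrullData.mem_O_iff_specialise_ptK_ne, fun _ _ => Specialisation.mem_valuationRing_iff⟩
end
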